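/- Let 1 ≤ p < ∞, let X be a complex Banach space and let (x_n)_{n∈ℕ} ⊂ X. If there is C ≥ 1 such that E_ε ‖∑_{n=1}^N ε_n a_n x_n‖_X ≤ C ‖∑_{n=1}^N a_n x_n‖_X for all N and all scalars a_1,…,a_N ∈ ℂ, then there is C' ≥ 1 (depending only on C and p) such that E_ε ‖∑_{n=1}^N ε_n a_n x_n n^{-s}‖_{H_p(X)} ≤ C' ‖∑_{n=1}^N a_n x_n n^{-s}‖_{H_p(X)} for all N and all scalars a_1,…,a_N ∈ ℂ. -/

import Mathlib

open MeasureTheory TopologicalSpace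

noncomputable section

instance : MeasurableSpace Circle := borel Circle
instance : BorelSpace Circle := ⟨rfl⟩

/-- The Haar probability measure on the circle `𝕋 = {z : ℂ, |z| = 1}`. -/
def muT : Measure Circle := Measure.haarMeasure ⊤

/-- The Haar probability measure on the infinite polytorus `𝕋^ℕ`
(equivalently, the product of the Haar probability measures of the factors). -/
def muTN : Measure (ℕ → Circle) := Measure.haarMeasure ⊤

instance : IsProbabilityMeasure muT := by
  constructor
  simpa [muT] using Measure.haarMeasure_self (K₀ := (⊤ : PositiveCompacts Circle))

instance : IsProbabilityMeasure muTN := by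
  constructor
  simpa [muTN] using Measure.haarMeasure_self (K₀ := (⊤ : PositiveCompacts (ℕ → Circle)))

/-- The monomial `z ↦ z^{α(n)}`, where `α(n)` is the finitely supported sequence of exponents
in the prime factorization `n = ∏_i pᵢ^{αᵢ(n)}`, the primes `pᵢ = Nat.nth Nat.Prime i` being
listed in increasing order.  (For `n ≥ 1`, every prime factor of `n` is among the first `n`
primes, so the range `Finset.range n` captures all nonzero exponents.) -/
def mon (n : ℕ) (z : ℕ → Circle) : ℂ :=
  ∏ i ∈ Finset.range n, (z i : ℂ) ^ (Nat.factorization n (Nat.nth Nat.Prime i))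

/-- The complex sign `±1` associated to a boolean sign choice. -/
def sgn {N : ℕ} (ε : Fin N → Bool) (n : Fin N) : ℂ := if ε n then 1 else -1

/-- The average `E_ε = 2^{-N} ∑_{ε ∈ {-1,1}^N}` over all choices of `N` signs. -/
def Eavg (N : ℕ) (F : (Fin N → Bool) → ℝ) : ℝ :=
  (2 ^ N : ℝ)⁻¹ * ∑ ε : Fin N → Bool, F ε

/-- The `H_p(X)`-norm of the Dirichlet polynomial `∑_{n=1}^N x_n n^{-s}`, defined via the Bohr
transform as `(∫_{𝕋^ℕ} ‖∑_{n=1}^N x_n z^{α(n)}‖_X^p dz)^{1/p}`.  Here, for `n : Fin N`,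
`x n` is the coefficient of `((n : ℕ) + 1)^{-s}`. -/
def Hnorm (p : ℝ) {X : Type*} [NormedAddCommGroup X] [NormedSpace ℂ X]
    (N : ℕ) (x : Fin N → X) : ℝ :=
  (∫ z : ℕ → Circle, ‖∑ n : Fin N, mon ((n : ℕ) + 1) z • x n‖ ^ p ∂muTN) ^ (1 / p)

universe u

/-!
Fix `z ∈ 𝕋^ℕ`. The hypothesis, applied to the coefficients `z^{α(n)} a_n`, and Kahane's
inequality for the Rademacher sum of the vectors `z^{α(n)} a_n x_n` bound
`E_ε ‖∑ ε_n z^{α(n)} a_n x_n‖^p` by `(16 · 3^p · C · ‖∑ z^{α(n)} a_n x_n‖)^p`. Integrating over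
`z` and using `E_ε F ≤ (E_ε F^p)^{1/p}` gives the claim with `C' = 16 · 3^p · C`.

Kahane's inequality comes from the Hoffmann-Jørgensen inequality
`P(‖S‖ > 2t + b) ≤ 4 P(‖S‖ > t)²`, where `b ≥ max ‖y_n‖` (and `max ‖y_n‖ ≤ E‖S‖`). It follows from
Lévy's reflection principle (flip all signs after the first exit time of the partial sums from
the ball of radius `t`) and the independence of the head and the tail of the sum. Starting from
Markov's bound at `t₀ = 8 · 3^p · E‖S‖`, iterating it makes the tails at `3^j t₀` decay fast
enough that `∑_j (3^{j+1} t₀)^p P(‖S‖ > 3^j t₀) ≤ t₀^p / 4`.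
-/

open Finset

section Averages

variable {N : ℕ}

lemma Eavg_mono {F G : (Fin N → Bool) → ℝ} (h : ∀ ε, F ε ≤ G ε) : Eavg N F ≤ Eavg N G :=
  mul_le_mul_of_nonneg_left (sum_le_sum fun ε _ => h ε) (by positivity)

lemma Eavg_nonneg {F : (Fin N → Bool) → ℝ} (h : ∀ ε, 0 ≤ F ε) : 0 ≤ Eavg N F :=
  mul_nonneg (by positivity) (sum_nonneg fun ε _ => h ε)

lemma Eavg_const (c : ℝ) : Eavg N (fun _ => c) = c := by
  simp [Eavg]

lemma Eavg_add (F G : (Fin N → Bool) → ℝ) :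
    Eavg N (fun ε => F ε + G ε) = Eavg N F + Eavg N G := by
  simp only [Eavg, sum_add_distrib, mul_add]

lemma Eavg_const_mul (c : ℝ) (F : (Fin N → Bool) → ℝ) :
    Eavg N (fun ε => c * F ε) = c * Eavg N F := by
  simp only [Eavg, ← mul_sum]
  ring

lemma Eavg_sum {ι : Type*} (s : Finset ι) (F : ι → (Fin N → Bool) → ℝ) :
    Eavg N (fun ε => ∑ i ∈ s, F i ε) = ∑ i ∈ s, Eavg N (F i) := by
  simp only [Eavg, mul_sum]
  exact sum_comm

lemma Eavg_comp_perm (e : Equiv.Perm (Fin N → Bool)) (F : (Fin N → Bool) → ℝ) :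
    Eavg N (fun ε => F (e ε)) = Eavg N F := by
  simp only [Eavg, Equiv.sum_comp e F]

lemma Eavg_le_rpow_Eavg_rpow {F : (Fin N → Bool) → ℝ} (hF : ∀ ε, 0 ≤ F ε) {p : ℝ}
    (hp : 1 ≤ p) : Eavg N F ≤ Eavg N (fun ε => F ε ^ p) ^ (1 / p) := by
  simpa only [Eavg, mul_sum] using Real.arith_mean_le_rpow_mean univ (fun _ => (2 ^ N : ℝ)⁻¹) F
    (fun _ _ => by positivity) (by simp) (fun ε _ => hF ε) hp

end Averages

lemma lt_norm_or_lt_norm_of_add_eq_two_smul {E : Type*} [NormedAddCommGroup E] [NormedSpace ℝ E]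
    {u v w : E} {t : ℝ} (h : u + v = (2 : ℝ) • w) (ht : t < ‖w‖) : t < ‖u‖ ∨ t < ‖v‖ := by
  by_contra! hc
  have : 2 * ‖w‖ ≤ t + t := by
    rw [← Real.norm_two, ← norm_smul, ← h]
    exact (norm_add_le u v).trans (add_le_add hc.1 hc.2)
  linarith

lemma card_le_two_mul_card_inter {α : Type*} [DecidableEq α] {A B : Finset α} {g : α → α}
    (hg : Function.Involutive g) (hA : ∀ a ∈ A, g a ∈ A) (hB : ∀ a ∈ A, a ∈ B ∨ g a ∈ B) :
    #A ≤ 2 * #(A ∩ B) := by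
  have hsub : A ⊆ (A ∩ B) ∪ (A ∩ B).image g := by
    intro a ha
    rcases hB a ha with hb | hb
    · exact mem_union_left _ (mem_inter.2 ⟨ha, hb⟩)
    · exact mem_union_right _ (mem_image.2 ⟨g a, mem_inter.2 ⟨hA a ha, hb⟩, hg a⟩)
  calc #A ≤ #((A ∩ B) ∪ (A ∩ B).image g) := card_le_card hsub
    _ ≤ #(A ∩ B) + #(A ∩ B) := (card_union_le _ _).trans (Nat.add_le_add_left card_image_le _)
    _ = 2 * #(A ∩ B) := (two_mul _).symm

lemma card_filter_and_mul_card_eq {ι β : Type*} [Fintype ι] [DecidableEq ι] [Fintype β]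
    (s : ι → Prop) [DecidablePred s] {f g : (ι → β) → Prop} [DecidablePred f] [DecidablePred g]
    (hf : ∀ ε δ, (∀ i, s i → ε i = δ i) → (f ε ↔ f δ))
    (hg : ∀ ε δ, (∀ i, ¬s i → ε i = δ i) → (g ε ↔ g δ)) :
    #{ε | f ε ∧ g ε} * Fintype.card (ι → β) = #{ε | f ε} * #{ε | g ε} := by
  -- `(ε, δ) ↦ (merge ε δ, merge δ ε)` is an involution carrying `{f ∧ g} × univ` onto `{f} × {g}`.
  let merge (ε δ : ι → β) : ι → β := fun i => if s i then ε i else δ i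
  have hmerge (ε δ : ι → β) : f (merge ε δ) ↔ f ε := hf _ _ fun i hi => if_pos hi
  have hmerge' (ε δ : ι → β) : g (merge δ ε) ↔ g ε := hg _ _ fun i hi => if_neg hi
  have hswap (ε δ : ι → β) : merge (merge ε δ) (merge δ ε) = ε := by
    funext i; by_cases hi : s i <;> simp [merge, hi]
  rw [← card_univ, ← card_product, ← card_product]
  refine card_bij' (fun p _ => (merge p.1 p.2, merge p.2 p.1))
    (fun p _ => (merge p.1 p.2, merge p.2 p.1)) ?_ ?_ ?_ ?_
  · rintro ⟨ε, δ⟩ h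
    simp only [mem_product, mem_filter, mem_univ, true_and] at h ⊢
    exact ⟨(hmerge ε δ).2 h.1.1, (hmerge' ε δ).2 h.1.2⟩
  · rintro ⟨ε, δ⟩ h
    simp only [mem_product, mem_filter, mem_univ, true_and, and_true] at h ⊢
    exact ⟨(hmerge ε δ).2 h.1, (hmerge' δ ε).2 h.2⟩
  · rintro ⟨ε, δ⟩ _
    simp only [hswap]
  · rintro ⟨ε, δ⟩ _
    simp only [hswap]

lemma le_geometric_of_le_four_mul_sq {q : ℝ → ℝ} (hq : Antitone q) (hq0 : ∀ t, 0 ≤ q t)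
    {m t₀ u : ℝ} (hm : 0 ≤ m) (hmt₀ : m ≤ t₀) (hsq : ∀ t, 0 ≤ t → q (2 * t + m) ≤ 4 * q t ^ 2)
    (ht₀ : q t₀ ≤ u) (hu : 4 * u ≤ 1) (j : ℕ) : q (3 ^ j * t₀) ≤ u * (4 * u) ^ j := by
  induction j with
  | zero => simpa using ht₀
  | succ j ih =>
    have hu0 : 0 ≤ u := (hq0 t₀).trans ht₀
    have h3 : (1 : ℝ) ≤ 3 ^ j := one_le_pow₀ (by norm_num)
    have hmt : m ≤ 3 ^ j * t₀ := by nlinarith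
    have hstep : 2 * (3 ^ j * t₀) + m ≤ 3 ^ (j + 1) * t₀ := by rw [pow_succ]; linarith
    calc q (3 ^ (j + 1) * t₀) ≤ 4 * q (3 ^ j * t₀) ^ 2 :=
          (hq hstep).trans (hsq _ (hm.trans hmt))
      _ ≤ 4 * (u * (4 * u) ^ j) ^ 2 := by gcongr; exact hq0 _
      _ = u * (4 * u) ^ (j + 1) * (4 * u) ^ j := by ring
      _ ≤ u * (4 * u) ^ (j + 1) :=
        mul_le_of_le_one_right (by positivity) (pow_le_one₀ (by positivity) hu)

lemma rpow_le_add_sum_ite {a : ℕ → ℝ} (ha : Monotone a) (ha0 : 0 ≤ a 0) {p s : ℝ} (hp : 0 ≤ p)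
    (hs : 0 ≤ s) {K : ℕ} (hK : s ≤ a K) :
    s ^ p ≤ a 0 ^ p + ∑ j ∈ range K, a (j + 1) ^ p * if a j < s then 1 else 0 := by
  have hterm (j : ℕ) : 0 ≤ a (j + 1) ^ p * if a j < s then 1 else 0 :=
    mul_nonneg (Real.rpow_nonneg (ha0.trans (ha (Nat.zero_le _))) p) (by split_ifs <;> norm_num)
  induction K with
  | zero => simpa using Real.rpow_le_rpow hs hK hp
  | succ K ih =>
    rw [sum_range_succ]
    by_cases h : s ≤ a K
    · linarith [ih h, hterm K]
    · rw [if_pos (not_le.1 h), mul_one]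
      have := Real.rpow_le_rpow hs hK hp
      have := Real.rpow_nonneg ha0 p
      linarith [sum_nonneg fun j (_ : j ∈ range K) => hterm j]

namespace Rademacher

variable {X : Type*} [NormedAddCommGroup X] [NormedSpace ℂ X] {N : ℕ}

lemma norm_sgn (ε : Fin N → Bool) (n : Fin N) : ‖sgn ε n‖ = 1 := by
  unfold sgn; split <;> simp

def signSum (y : Fin N → X) (ε : Fin N → Bool) : X := ∑ n, sgn ε n • y n

def headSum (y : Fin N → X) (k : ℕ) (ε : Fin N → Bool) : X :=
  ∑ n ∈ {n : Fin N | ↑n < k}, sgn ε n • y n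

def tailSum (y : Fin N → X) (k : ℕ) (ε : Fin N → Bool) : X :=
  ∑ n ∈ {n : Fin N | ¬↑n < k}, sgn ε n • y n

def flipFrom (k : ℕ) (ε : Fin N → Bool) : Fin N → Bool :=
  fun n => if (n : ℕ) < k then ε n else !ε n

variable (y : Fin N → X)

lemma headSum_add_tailSum (k : ℕ) (ε : Fin N → Bool) :
    headSum y k ε + tailSum y k ε = signSum y ε :=
  sum_filter_add_sum_filter_not univ _ _

lemma flipFrom_involutive (k : ℕ) : Function.Involutive (flipFrom (N := N) k) := by
  intro ε; funext n; unfold flipFrom; split_ifs <;> simp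

lemma headSum_flipFrom {j k : ℕ} (hjk : j ≤ k) (ε : Fin N → Bool) :
    headSum y j (flipFrom k ε) = headSum y j ε :=
  sum_congr rfl fun n hn => by
    rw [mem_filter] at hn
    simp [sgn, flipFrom, hn.2.trans_le hjk]

lemma tailSum_flipFrom (k : ℕ) (ε : Fin N → Bool) :
    tailSum y k (flipFrom k ε) = -tailSum y k ε := by
  rw [tailSum, tailSum, ← sum_neg_distrib]
  refine sum_congr rfl fun n hn => ?_
  rw [mem_filter] at hn
  simp only [sgn, flipFrom, if_neg hn.2]
  cases ε n <;> simp

lemma signSum_flipFrom (k : ℕ) (ε : Fin N → Bool) :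
    signSum y (flipFrom k ε) = headSum y k ε - tailSum y k ε := by
  rw [← headSum_add_tailSum, headSum_flipFrom y le_rfl, tailSum_flipFrom, sub_eq_add_neg]

lemma headSum_zero (ε : Fin N → Bool) : headSum y 0 ε = 0 := by
  simp [headSum]

lemma headSum_of_le {k : ℕ} (hk : N ≤ k) (ε : Fin N → Bool) : headSum y k ε = signSum y ε := by
  rw [headSum, filter_true_of_mem fun n _ => n.2.trans_le hk, signSum]

lemma headSum_succ {k : ℕ} (hk : k < N) (ε : Fin N → Bool) :
    headSum y (k + 1) ε = headSum y k ε + sgn ε ⟨k, hk⟩ • y ⟨k, hk⟩ := by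
  have : ({n | ↑n < k + 1} : Finset (Fin N)) = insert ⟨k, hk⟩ ({n | ↑n < k} : Finset (Fin N)) := by
    ext n
    simp only [mem_filter, mem_univ, true_and, mem_insert, Fin.ext_iff]
    omega
  rw [headSum, this, sum_insert (by simp), add_comm, headSum]

lemma Eavg_comp_flipFrom (k : ℕ) (F : (Fin N → Bool) → ℝ) :
    Eavg N (fun ε => F (flipFrom k ε)) = Eavg N F :=
  Eavg_comp_perm (flipFrom_involutive k).toPerm F

lemma norm_signSum_le (ε : Fin N → Bool) : ‖signSum y ε‖ ≤ ∑ n, ‖y n‖ := by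
  refine (norm_sum_le _ _).trans_eq ?_
  simp only [norm_smul, norm_sgn, one_mul]

lemma norm_le_Eavg_norm_signSum (n : Fin N) : ‖y n‖ ≤ Eavg N fun ε => ‖signSum y ε‖ := by
  -- `flipFrom n ε` and `flipFrom (n + 1) ε` differ exactly in the `n`-th sign.
  have key (ε : Fin N → Bool) :
      2 * ‖y n‖ ≤ ‖signSum y (flipFrom n ε)‖ + ‖signSum y (flipFrom (n + 1) ε)‖ := by
    have hT (k : ℕ) : tailSum y k ε = signSum y ε - headSum y k ε :=
      eq_sub_of_add_eq' (headSum_add_tailSum y k ε)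
    have h : signSum y (flipFrom (n + 1) ε) - signSum y (flipFrom n ε) =
        (2 : ℝ) • (sgn ε n • y n) := by
      rw [signSum_flipFrom, signSum_flipFrom, hT, hT, headSum_succ y n.2, two_smul]
      abel
    calc 2 * ‖y n‖ = ‖(2 : ℝ) • (sgn ε n • y n)‖ := by
          rw [norm_smul, norm_smul, norm_sgn, one_mul, Real.norm_two]
      _ ≤ ‖signSum y (flipFrom (n + 1) ε)‖ + ‖signSum y (flipFrom n ε)‖ := h ▸ norm_sub_le _ _
      _ = _ := add_comm _ _
  have := Eavg_mono key
  rw [Eavg_const, Eavg_add, Eavg_comp_flipFrom (F := fun ε => ‖signSum y ε‖),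
    Eavg_comp_flipFrom (F := fun ε => ‖signSum y ε‖)] at this
  linarith

lemma headSum_congr {j k : ℕ} (hjk : j ≤ k) {ε δ : Fin N → Bool}
    (h : ∀ n : Fin N, ↑n < k → ε n = δ n) : headSum y j ε = headSum y j δ :=
  sum_congr rfl fun n hn => by
    rw [mem_filter] at hn
    rw [sgn, sgn, h n (hn.2.trans_le hjk)]

lemma tailSum_congr {k : ℕ} {ε δ : Fin N → Bool} (h : ∀ n : Fin N, ¬↑n < k → ε n = δ n) :
    tailSum y k ε = tailSum y k δ :=
  sum_congr rfl fun n hn => by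
    rw [mem_filter] at hn
    rw [sgn, sgn, h n hn.2]

def exceedSet (t : ℝ) : Finset (Fin N → Bool) := {ε | t < ‖signSum y ε‖}

def firstExitSet (t : ℝ) (k : ℕ) : Finset (Fin N → Bool) :=
  {ε | t < ‖headSum y k ε‖ ∧ ∀ j < k, ‖headSum y j ε‖ ≤ t}

def tailExceedSet (t : ℝ) (k : ℕ) : Finset (Fin N → Bool) := {ε | t < ‖tailSum y k ε‖}

lemma card_firstExitSet_le (t : ℝ) (k : ℕ) :
    #(firstExitSet y t k) ≤ 2 * #(firstExitSet y t k ∩ exceedSet y t) := by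
  refine card_le_two_mul_card_inter (flipFrom_involutive k) (fun ε hε => ?_) (fun ε hε => ?_)
  · simp only [firstExitSet, mem_filter, mem_univ, true_and] at hε ⊢
    rw [headSum_flipFrom y le_rfl]
    exact ⟨hε.1, fun j hj => (headSum_flipFrom y hj.le ε).symm ▸ hε.2 j hj⟩
  · simp only [firstExitSet, exceedSet, mem_filter, mem_univ, true_and] at hε ⊢
    refine lt_norm_or_lt_norm_of_add_eq_two_smul ?_ hε.1
    rw [signSum_flipFrom, ← headSum_add_tailSum y k ε, two_smul]
    abel

lemma card_tailExceedSet_le (t : ℝ) (k : ℕ) : #(tailExceedSet y t k) ≤ 2 * #(exceedSet y t) := by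
  refine (card_le_two_mul_card_inter (B := exceedSet y t) (flipFrom_involutive k)
    (fun ε hε => ?_) (fun ε hε => ?_)).trans
      (Nat.mul_le_mul_left 2 (card_le_card inter_subset_right))
  · simp only [tailExceedSet, mem_filter, mem_univ, true_and] at hε ⊢
    rwa [tailSum_flipFrom, norm_neg]
  · simp only [tailExceedSet, exceedSet, mem_filter, mem_univ, true_and] at hε ⊢
    have h : signSum y ε + -signSum y (flipFrom k ε) = (2 : ℝ) • tailSum y k ε := by
      rw [signSum_flipFrom, ← headSum_add_tailSum y k ε, two_smul]
      abel
    simpa only [norm_neg] using lt_norm_or_lt_norm_of_add_eq_two_smul h hε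

lemma sum_card_firstExitSet_le (t : ℝ) (K : ℕ) :
    ∑ k ∈ range K, #(firstExitSet y t k) ≤ 2 * #(exceedSet y t) := by
  have hdisj : (range K : Set ℕ).PairwiseDisjoint fun k => firstExitSet y t k ∩ exceedSet y t := by
    have hlt {k l : ℕ} (hkl : k < l) : Disjoint (firstExitSet y t k) (firstExitSet y t l) := by
      refine disjoint_left.2 fun ε hk hl => ?_
      simp only [firstExitSet, mem_filter, mem_univ, true_and] at hk hl
      exact (hl.2 k hkl).not_gt hk.1
    intro k _ l _ hkl
    refine Disjoint.mono inter_subset_left inter_subset_left ?_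
    rcases hkl.lt_or_gt with h | h
    exacts [hlt h, (hlt h).symm]
  calc ∑ k ∈ range K, #(firstExitSet y t k)
      ≤ ∑ k ∈ range K, 2 * #(firstExitSet y t k ∩ exceedSet y t) :=
        sum_le_sum fun k _ => card_firstExitSet_le y t k
    _ = 2 * #((range K).biUnion fun k => firstExitSet y t k ∩ exceedSet y t) := by
        rw [card_biUnion hdisj, mul_sum]
    _ ≤ 2 * #(exceedSet y t) :=
        Nat.mul_le_mul_left 2 (card_le_card (biUnion_subset.2 fun _ _ => inter_subset_right))

lemma exceedSet_subset_biUnion {t b : ℝ} (ht : 0 ≤ t) (hb0 : 0 ≤ b) (hb : ∀ n, ‖y n‖ ≤ b) :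
    exceedSet y (2 * t + b) ⊆
      (range (N + 1)).biUnion fun k => firstExitSet y t k ∩ tailExceedSet y t k := by
  intro ε hε
  simp only [exceedSet, mem_filter, mem_univ, true_and] at hε
  have hex : ∃ k, t < ‖headSum y k ε‖ := ⟨N, by rw [headSum_of_le y le_rfl]; linarith⟩
  classical
  set k := Nat.find hex
  have hexit : t < ‖headSum y k ε‖ := Nat.find_spec hex
  have hbefore : ∀ j < k, ‖headSum y j ε‖ ≤ t := fun j hj => not_lt.1 (Nat.find_min hex hj)
  have hkN : k ≤ N := Nat.find_min' hex (by rw [headSum_of_le y le_rfl]; linarith)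
  obtain ⟨j, hj⟩ : ∃ j, k = j + 1 := Nat.exists_eq_add_one_of_ne_zero fun hk0 => by
    rw [hk0, headSum_zero, norm_zero] at hexit
    linarith
  have hjN : j < N := by omega
  have hhead : ‖headSum y k ε‖ ≤ t + b := by
    rw [hj, headSum_succ y hjN]
    refine (norm_add_le _ _).trans (add_le_add (hbefore j (by omega)) ?_)
    rw [norm_smul, norm_sgn, one_mul]
    exact hb _
  have htail : t < ‖tailSum y k ε‖ := by
    have := (headSum_add_tailSum y k ε) ▸ norm_add_le (headSum y k ε) (tailSum y k ε)
    linarith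
  simp only [mem_biUnion, mem_range, mem_inter, firstExitSet, tailExceedSet, mem_filter,
    mem_univ, true_and]
  exact ⟨k, by omega, ⟨hexit, hbefore⟩, htail⟩

lemma card_firstExitSet_inter_tailExceedSet (t : ℝ) (k : ℕ) :
    #(firstExitSet y t k ∩ tailExceedSet y t k) * 2 ^ N =
      #(firstExitSet y t k) * #(tailExceedSet y t k) := by
  rw [firstExitSet, tailExceedSet, ← filter_and, show 2 ^ N = Fintype.card (Fin N → Bool) by simp]
  refine card_filter_and_mul_card_eq (fun n : Fin N => ↑n < k) (fun ε δ h => ?_)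
    (fun ε δ h => by rw [tailSum_congr y h])
  rw [headSum_congr y le_rfl h]
  exact and_congr_right' (forall₂_congr fun j hj => by rw [headSum_congr y hj.le h])

/-- The Hoffmann-Jørgensen inequality for Rademacher sums. -/
lemma card_exceedSet_two_mul_add_le {t b : ℝ} (ht : 0 ≤ t) (hb0 : 0 ≤ b)
    (hb : ∀ n, ‖y n‖ ≤ b) :
    #(exceedSet y (2 * t + b)) * 2 ^ N ≤ 4 * #(exceedSet y t) ^ 2 :=
  calc #(exceedSet y (2 * t + b)) * 2 ^ N
      ≤ (∑ k ∈ range (N + 1), #(firstExitSet y t k ∩ tailExceedSet y t k)) * 2 ^ N :=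
        Nat.mul_le_mul_right _ ((card_le_card (exceedSet_subset_biUnion y ht hb0 hb)).trans
          card_biUnion_le)
    _ = ∑ k ∈ range (N + 1), #(firstExitSet y t k) * #(tailExceedSet y t k) := by
        rw [sum_mul]
        exact sum_congr rfl fun k _ => card_firstExitSet_inter_tailExceedSet y t k
    _ ≤ ∑ k ∈ range (N + 1), #(firstExitSet y t k) * (2 * #(exceedSet y t)) :=
        sum_le_sum fun k _ => Nat.mul_le_mul_left _ (card_tailExceedSet_le y t k)
    _ ≤ (2 * #(exceedSet y t)) * (2 * #(exceedSet y t)) := by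
        rw [← sum_mul]
        exact Nat.mul_le_mul_right _ (sum_card_firstExitSet_le y t _)
    _ = 4 * #(exceedSet y t) ^ 2 := by ring

def tailProb (t : ℝ) : ℝ := Eavg N fun ε => if t < ‖signSum y ε‖ then 1 else 0

lemma tailProb_eq_card_div (t : ℝ) : tailProb y t = #(exceedSet y t) / 2 ^ N := by
  rw [tailProb, Eavg, sum_boole, exceedSet, inv_mul_eq_div]

lemma tailProb_nonneg (t : ℝ) : 0 ≤ tailProb y t :=
  Eavg_nonneg fun _ => by split_ifs <;> norm_num

lemma tailProb_antitone : Antitone (tailProb y) := fun s t hst =>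
  Eavg_mono fun ε => by
    split_ifs with ht hs <;> norm_num
    exact hs (hst.trans_lt ht)

lemma mul_tailProb_le (t : ℝ) : t * tailProb y t ≤ Eavg N fun ε => ‖signSum y ε‖ := by
  rw [tailProb, ← Eavg_const_mul]
  exact Eavg_mono fun ε => by
    split_ifs with h
    · linarith
    · simp

lemma tailProb_two_mul_add_le {t b : ℝ} (ht : 0 ≤ t) (hb0 : 0 ≤ b) (hb : ∀ n, ‖y n‖ ≤ b) :
    tailProb y (2 * t + b) ≤ 4 * tailProb y t ^ 2 := by
  have h := card_exceedSet_two_mul_add_le y ht hb0 hb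
  rw [tailProb_eq_card_div, tailProb_eq_card_div, div_pow, ← mul_div_assoc,
    div_le_div_iff₀ (by positivity) (by positivity), pow_two ((2 : ℝ) ^ N), ← mul_assoc]
  exact mul_le_mul_of_nonneg_right (by exact_mod_cast h) (by positivity)

lemma tailProb_three_pow_mul_le {R : ℝ} (hR : 1 ≤ R)
    (hm : 0 < Eavg N fun ε => ‖signSum y ε‖) (j : ℕ) :
    tailProb y (3 ^ j * (8 * R * Eavg N fun ε => ‖signSum y ε‖)) ≤
      (8 * R)⁻¹ * (2 * R)⁻¹ ^ j := by
  have h4 : 4 * (8 * R)⁻¹ = (2 * R)⁻¹ := by field_simp; norm_num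
  rw [← h4]
  refine le_geometric_of_le_four_mul_sq (tailProb_antitone y) (tailProb_nonneg y) hm.le
    (by nlinarith) (fun t ht => tailProb_two_mul_add_le y ht hm.le (norm_le_Eavg_norm_signSum y))
    ?_ ?_ j
  · rw [← mul_le_mul_iff_right₀ (by positivity : 0 < 8 * R * Eavg N fun ε => ‖signSum y ε‖)]
    exact (mul_tailProb_le y _).trans_eq (by field_simp)
  · rw [h4, inv_le_one₀ (by positivity)]
    linarith

lemma Eavg_rpow_norm_signSum_le_add_sum {p t₀ : ℝ} (hp : 0 ≤ p) (ht₀ : 0 ≤ t₀) {K : ℕ}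
    (hK : ∀ ε, ‖signSum y ε‖ ≤ 3 ^ K * t₀) :
    (Eavg N fun ε => ‖signSum y ε‖ ^ p) ≤
      t₀ ^ p + ∑ j ∈ range K, (3 ^ (j + 1) * t₀) ^ p * tailProb y (3 ^ j * t₀) := by
  have hlayer ε : ‖signSum y ε‖ ^ p ≤ t₀ ^ p +
      ∑ j ∈ range K, (3 ^ (j + 1) * t₀) ^ p * if 3 ^ j * t₀ < ‖signSum y ε‖ then 1 else 0 := by
    simpa using rpow_le_add_sum_ite (a := fun j => 3 ^ j * t₀)
      (fun i j hij => mul_le_mul_of_nonneg_right (pow_le_pow_right₀ (by norm_num) hij) ht₀)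
      (by simpa using ht₀) hp (norm_nonneg _) (hK ε)
  refine (Eavg_mono hlayer).trans_eq ?_
  rw [Eavg_add, Eavg_const, Eavg_sum]
  simp only [Eavg_const_mul, tailProb]

/-- Kahane's inequality for Rademacher sums in a Banach space. -/
theorem Eavg_norm_signSum_rpow_le {p : ℝ} (hp : 1 ≤ p) :
    (Eavg N fun ε => ‖signSum y ε‖ ^ p) ≤ (16 * 3 ^ p * Eavg N fun ε => ‖signSum y ε‖) ^ p := by
  have hp0 : 0 < p := zero_lt_one.trans_le hp
  have hS ε : ‖signSum y ε‖ ≤ N * Eavg N fun ε => ‖signSum y ε‖ := (norm_signSum_le y ε).trans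
    ((sum_le_sum fun n _ => norm_le_Eavg_norm_signSum y n).trans_eq (by simp))
  rcases (Eavg_nonneg fun ε => norm_nonneg (signSum y ε)).eq_or_lt with hm | hm
  · simp only [← hm, mul_zero] at hS
    simp only [fun ε => le_antisymm (hS ε) (norm_nonneg _), Real.zero_rpow hp0.ne', Eavg_const]
    positivity
  have hR : 1 ≤ (3 : ℝ) ^ p := Real.one_le_rpow (by norm_num) hp0.le
  have hdecay := tailProb_three_pow_mul_le y hR hm
  generalize Eavg N (fun ε => ‖signSum y ε‖) = m at hS hm hdecay ⊢
  generalize hR_def : (3 : ℝ) ^ p = R at hR hdecay ⊢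
  have ht₀ : 0 < 8 * R * m := by positivity
  generalize ht₀_def : 8 * R * m = t₀ at ht₀ hdecay
  obtain ⟨K, hK⟩ := pow_unbounded_of_one_lt (N * m / t₀) (by norm_num : (1 : ℝ) < 3)
  have hterm (j : ℕ) : (3 ^ (j + 1) * t₀) ^ p * tailProb y (3 ^ j * t₀) ≤
      t₀ ^ p / 8 * (1 / 2) ^ j := by
    have hpow : (3 ^ (j + 1) * t₀) ^ p = R ^ (j + 1) * t₀ ^ p := by
      rw [Real.mul_rpow (by positivity) ht₀.le, ← Real.rpow_pow_comm (by norm_num), hR_def]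
    refine (mul_le_mul_of_nonneg_left (hdecay j) (by positivity)).trans_eq ?_
    rw [hpow, inv_pow, pow_succ, mul_pow, one_div, inv_pow]
    field_simp
  calc (Eavg N fun ε => ‖signSum y ε‖ ^ p)
      ≤ t₀ ^ p + ∑ j ∈ range K, (3 ^ (j + 1) * t₀) ^ p * tailProb y (3 ^ j * t₀) :=
        Eavg_rpow_norm_signSum_le_add_sum y hp0.le ht₀.le fun ε =>
          (hS ε).trans ((div_lt_iff₀ ht₀).1 hK).le
    _ ≤ t₀ ^ p + t₀ ^ p / 8 * ∑ j ∈ range K, (1 / 2 : ℝ) ^ j := by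
        rw [mul_sum]
        exact add_le_add le_rfl (sum_le_sum fun j _ => hterm j)
    _ ≤ 2 ^ p * t₀ ^ p := by
        have := sum_geometric_two_le K
        have : (2 : ℝ) ≤ 2 ^ p := by simpa using Real.rpow_le_rpow_of_exponent_le one_le_two hp
        nlinarith [Real.rpow_nonneg ht₀.le p]
    _ = (16 * R * m) ^ p := by
        rw [← Real.mul_rpow zero_le_two ht₀.le, ← ht₀_def]
        ring_nf

end Rademacher

open Rademacher

lemma Eavg_integral {α : Type*} [MeasurableSpace α] {μ : Measure α} {N : ℕ}
    {G : (Fin N → Bool) → α → ℝ} (hG : ∀ ε, Integrable (G ε) μ) :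
    Eavg N (fun ε => ∫ z, G ε z ∂μ) = ∫ z, Eavg N (fun ε => G ε z) ∂μ := by
  simp only [Eavg]
  rw [integral_const_mul, integral_finsetSum _ fun ε _ => hG ε]

lemma integral_mul_rpow_rpow_one_div {α : Type*} [MeasurableSpace α] (μ : Measure α)
    {f : α → ℝ} (hf : ∀ z, 0 ≤ f z) {c p : ℝ} (hc : 0 ≤ c) (hp : p ≠ 0) :
    (∫ z, (c * f z) ^ p ∂μ) ^ (1 / p) = c * (∫ z, f z ^ p ∂μ) ^ (1 / p) := by
  simp_rw [Real.mul_rpow hc (hf _)]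
  rw [integral_const_mul, Real.mul_rpow (Real.rpow_nonneg hc p)
    (integral_nonneg fun z => Real.rpow_nonneg (hf z) p), ← Real.rpow_mul hc,
    mul_one_div_cancel hp, Real.rpow_one]

section Bohr

variable {X : Type*} [NormedAddCommGroup X] [NormedSpace ℂ X]

lemma continuous_mon (n : ℕ) : Continuous (mon n) :=
  continuous_finsetProd _ fun i _ => (continuous_subtype_val.comp (continuous_apply i)).pow _

lemma integrable_norm_sum_mon_smul_rpow {p : ℝ} (hp : 0 ≤ p) {N : ℕ} (v : Fin N → X) :
    Integrable (fun z => ‖∑ n : Fin N, mon ((n : ℕ) + 1) z • v n‖ ^ p) muTN :=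
  ((continuous_finsetSum _ fun _ _ => (continuous_mon _).smul continuous_const).norm.rpow_const
    fun _ => Or.inr hp).integrable_of_hasCompactSupport (HasCompactSupport.of_compactSpace _)

lemma Hnorm_nonneg (p : ℝ) {N : ℕ} (v : Fin N → X) : 0 ≤ Hnorm p N v :=
  Real.rpow_nonneg (integral_nonneg fun _ => Real.rpow_nonneg (norm_nonneg _) p) _

lemma Hnorm_rpow {p : ℝ} (hp : p ≠ 0) {N : ℕ} (v : Fin N → X) :
    Hnorm p N v ^ p = ∫ z, ‖∑ n : Fin N, mon ((n : ℕ) + 1) z • v n‖ ^ p ∂muTN := by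
  rw [Hnorm, ← Real.rpow_mul (integral_nonneg fun z => Real.rpow_nonneg (norm_nonneg _) p),
    one_div_mul_cancel hp, Real.rpow_one]

lemma Eavg_Hnorm_rpow {p : ℝ} (hp : 0 < p) {N : ℕ} (v : Fin N → X) :
    (Eavg N fun ε => Hnorm p N (fun n => sgn ε n • v n) ^ p) =
      ∫ z, Eavg N (fun ε => ‖signSum (fun n => mon ((n : ℕ) + 1) z • v n) ε‖ ^ p) ∂muTN := by
  simp only [Hnorm_rpow hp.ne']
  rw [Eavg_integral fun ε => integrable_norm_sum_mon_smul_rpow hp.le _]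
  simp only [signSum, smul_comm (mon _ _) (sgn _ _)]

lemma rpow_one_div_integral_le_mul_Hnorm {p : ℝ} (hp : 0 < p) {D : ℝ} (hD : 0 ≤ D) {N : ℕ}
    (v : Fin N → X) {G : (ℕ → Circle) → ℝ} (hG0 : ∀ z, 0 ≤ G z)
    (hG : ∀ z, G z ≤ (D * ‖∑ n : Fin N, mon ((n : ℕ) + 1) z • v n‖) ^ p) :
    (∫ z, G z ∂muTN) ^ (1 / p) ≤ D * Hnorm p N v := by
  have hint : Integrable (fun z => (D * ‖∑ n : Fin N, mon ((n : ℕ) + 1) z • v n‖) ^ p) muTN :=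
    ((integrable_norm_sum_mon_smul_rpow hp.le v).const_mul (D ^ p)).congr
      (ae_of_all _ fun z => (Real.mul_rpow hD (norm_nonneg _)).symm)
  refine (Real.rpow_le_rpow (integral_nonneg hG0)
    (integral_mono_of_nonneg (ae_of_all _ hG0) hint (ae_of_all _ hG)) (by positivity)).trans_eq ?_
  exact integral_mul_rpow_rpow_one_div muTN (fun _ => norm_nonneg _) hD hp.ne'

lemma Eavg_norm_signSum_rpow_le_of_unconditional {p C : ℝ} (hp : 1 ≤ p) (x : ℕ → X)
    (hx : ∀ (N : ℕ) (a : Fin N → ℂ),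
      Eavg N (fun ε => ‖∑ n : Fin N, sgn ε n • (a n • x ((n : ℕ) + 1))‖) ≤
        C * ‖∑ n : Fin N, a n • x ((n : ℕ) + 1)‖)
    {N : ℕ} (a : Fin N → ℂ) :
    (Eavg N fun ε => ‖signSum (fun n => a n • x ((n : ℕ) + 1)) ε‖ ^ p) ≤
      (16 * 3 ^ p * C * ‖∑ n : Fin N, a n • x ((n : ℕ) + 1)‖) ^ p := by
  refine (Eavg_norm_signSum_rpow_le _ hp).trans (Real.rpow_le_rpow ?_ ?_ (by linarith))
  · exact mul_nonneg (by positivity) (Eavg_nonneg fun _ => norm_nonneg _)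
  · exact (mul_le_mul_of_nonneg_left (hx N a) (by positivity)).trans_eq (by ring)

end Bohr

/-- **Remark.** If `(x_n)` is a `C`-RUC sequence in `X`, then `(x_n n^{-s})` is RUC in
`H_p(X)`, with a constant `C'` depending only on `C` and `p`. -/
theorem stmt6 (p : ℝ) (hp : 1 ≤ p) (C : ℝ) (hC : 1 ≤ C) :
    ∃ C' : ℝ, 1 ≤ C' ∧ ∀ (X : Type u) (_ : NormedAddCommGroup X) (_ : NormedSpace ℂ X)
      (_ : CompleteSpace X) (x : ℕ → X),
      (∀ (N : ℕ) (a : Fin N → ℂ),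
        Eavg N (fun ε => ‖∑ n : Fin N, sgn ε n • (a n • x ((n : ℕ) + 1))‖) ≤
          C * ‖∑ n : Fin N, a n • x ((n : ℕ) + 1)‖) →
      ∀ (N : ℕ) (a : Fin N → ℂ),
        Eavg N (fun ε => Hnorm p N (fun n => sgn ε n • (a n • x ((n : ℕ) + 1)))) ≤
          C' * Hnorm p N (fun n => a n • x ((n : ℕ) + 1)) := by
  have hp0 : 0 < p := zero_lt_one.trans_le hp
  have h3p : 1 ≤ (3 : ℝ) ^ p := Real.one_le_rpow (by norm_num) hp0.le
  refine ⟨16 * 3 ^ p * C, by nlinarith, fun X _ _ _ x hx N a => ?_⟩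
  calc (Eavg N fun ε => Hnorm p N fun n => sgn ε n • a n • x ((n : ℕ) + 1))
      ≤ (Eavg N fun ε => (Hnorm p N fun n => sgn ε n • a n • x ((n : ℕ) + 1)) ^ p) ^ (1 / p) :=
        Eavg_le_rpow_Eavg_rpow (fun _ => Hnorm_nonneg p _) hp
    _ ≤ 16 * 3 ^ p * C * Hnorm p N fun n => a n • x ((n : ℕ) + 1) := by
        rw [Eavg_Hnorm_rpow hp0]
        refine rpow_one_div_integral_le_mul_Hnorm hp0 (by positivity) _
          (fun z => Eavg_nonneg fun _ => by positivity) fun z => ?_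
        simpa only [mul_smul] using
          Eavg_norm_signSum_rpow_le_of_unconditional hp x hx fun n => mon ((n : ℕ) + 1) z * a n
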